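/- Let H be a bialgebra over a field k, let (f,F) and (g,G) be twisted automorphisms of H, and let a ∈ H be an invertible gauge transformation from (f,F) to (g,G), i.e. a·f(x) = g(x)·a for all x ∈ H and G·Δ(a) = (a⊗a)·F. Then for every universal R-matrix R on H one has G⁻¹ · (g⊗g)(R) · τ(G) = F⁻¹ · (f⊗f)(R) · τ(F); i.e. gauge equivalent twisted automorphisms act equally on universal R-matrices. -/

import Mathlib

/-!
The two sides are compared after multiplying by `G` on the left and by `τ(Δa)` on the right,
both invertible. For the `(g, G)` side the gauge condition gives
`(g⊗g)(R)·τ(GΔa) = (g⊗g)(R)·(a⊗a)·τ(F) = (a⊗a)·(f⊗f)(R)·τ(F)`, using `a f(x) = g(x) a`.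
For the `(f, F)` side, the twisted matrix `F⁻¹(f⊗f)(R)τ(F)` intertwines `τ∘Δ` with `Δ` just as
`R` does, so it can be moved past `τ(Δa)`, leaving `GΔa·F⁻¹(f⊗f)(R)τ(F) = (a⊗a)(f⊗f)(R)τ(F)`.
-/

open scoped TensorProduct

noncomputable section

variable (K H : Type*) [Field K] [Ring H] [Bialgebra K H]

/-- The comultiplication of the bialgebra `H`. -/
def cm : H →ₗ[K] H ⊗[K] H := Coalgebra.comul

/-- The counit of the bialgebra `H`. -/
def cu : H →ₗ[K] K := Coalgebra.counit

/-- A twisted automorphism of the bialgebra `H` is a pair `(f, F)` where `f` is a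
`K`-algebra automorphism of `H` and `F ∈ H ⊗ H` is invertible, such that
`F·Δ(f(x)) = (f⊗f)(Δ(x))·F` for all `x`,
`(F⊗1)·(Δ⊗I)(F) = (1⊗F)·(I⊗Δ)(F)` (the 2-cocycle condition), and
`ε∘f = ε`, `(ε⊗I)(F) = 1 = (I⊗ε)(F)` (normalisation). -/
structure IsTwistedAut (f : H ≃ₐ[K] H) (F : H ⊗[K] H) : Prop where
  isUnit : IsUnit F
  conj : ∀ x : H,
    F * cm K H (f x) = Algebra.TensorProduct.map f.toAlgHom f.toAlgHom (cm K H x) * F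
  cocycle : TensorProduct.assoc K H H H ((F ⊗ₜ[K] (1 : H)) * LinearMap.rTensor H (cm K H) F)
      = ((1 : H) ⊗ₜ[K] F) * LinearMap.lTensor H (cm K H) F
  counit_comp : ∀ x : H, cu K H (f x) = cu K H x
  counit_left : TensorProduct.lid K H (LinearMap.rTensor H (cu K H) F) = 1
  counit_right : TensorProduct.rid K H (LinearMap.lTensor H (cu K H) F) = 1

/-- For `S = Σ aᵢ⊗bᵢ ∈ H ⊗ H`, the element `S₁₂ = Σ aᵢ⊗bᵢ⊗1` of `H ⊗ (H ⊗ H)`. -/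
def s12 (S : H ⊗[K] H) : H ⊗[K] (H ⊗[K] H) :=
  TensorProduct.assoc K H H H (S ⊗ₜ[K] (1 : H))

/-- For `S = Σ aᵢ⊗bᵢ ∈ H ⊗ H`, the element `S₂₃ = Σ 1⊗aᵢ⊗bᵢ` of `H ⊗ (H ⊗ H)`. -/
def s23 (S : H ⊗[K] H) : H ⊗[K] (H ⊗[K] H) := (1 : H) ⊗ₜ[K] S

/-- For `S = Σ aᵢ⊗bᵢ ∈ H ⊗ H`, the element `S₁₃ = Σ aᵢ⊗1⊗bᵢ` of `H ⊗ (H ⊗ H)`. -/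
def s13 (S : H ⊗[K] H) : H ⊗[K] (H ⊗[K] H) :=
  LinearMap.lTensor H (TensorProduct.comm K H H).toLinearMap (s12 K H S)

/-- A universal R-matrix on the bialgebra `H`: an invertible `R ∈ H ⊗ H` such that
`R·τ(Δ(x)) = Δ(x)·R` for all `x`, `(I⊗Δ)(R) = R₂₃R₁₃` and `(Δ⊗I)(R) = R₁₂R₁₃`. -/
structure IsRMatrix (R : H ⊗[K] H) : Prop where
  isUnit : IsUnit R
  conj : ∀ x : H, R * TensorProduct.comm K H H (cm K H x) = cm K H x * R
  hexagon_left : LinearMap.lTensor H (cm K H) R = s23 K H R * s13 K H R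
  hexagon_right :
    TensorProduct.assoc K H H H (LinearMap.rTensor H (cm K H) R) = s12 K H R * s13 K H R

theorem SemiconjBy.ringInverse_symm_left {M : Type*} [MonoidWithZero M] {u x y : M}
    (hu : IsUnit u) (h : SemiconjBy u x y) : SemiconjBy (Ring.inverse u) y x := by
  obtain ⟨u, rfl⟩ := hu
  rw [Ring.inverse_unit]
  exact h.units_inv_symm_left

section AlgebraTensorProduct

variable {R A B C D : Type*} [CommSemiring R] [Semiring A] [Algebra R A] [Semiring B]
  [Algebra R B] [Semiring C] [Algebra R C] [Semiring D] [Algebra R D]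

theorem TensorProduct.comm_mul (x y : A ⊗[R] B) :
    TensorProduct.comm R A B (x * y) = TensorProduct.comm R A B x * TensorProduct.comm R A B y :=
  map_mul (Algebra.TensorProduct.comm R A B) x y

theorem Algebra.TensorProduct.comm_map (f : A →ₐ[R] C) (g : B →ₐ[R] D) (x : A ⊗[R] B) :
    TensorProduct.comm R C D (map f g x) = map g f (TensorProduct.comm R A B x) :=
  (TensorProduct.map_comm g.toLinearMap f.toLinearMap x).symm

theorem Algebra.TensorProduct.map_mul_tmul_eq_tmul_mul_map {f₁ g₁ : A →ₐ[R] C}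
    {f₂ g₂ : B →ₐ[R] D} {c : C} {d : D} (h₁ : ∀ x, c * f₁ x = g₁ x * c)
    (h₂ : ∀ y, d * f₂ y = g₂ y * d) (S : A ⊗[R] B) :
    map g₁ g₂ S * (c ⊗ₜ d) = (c ⊗ₜ d) * map f₁ f₂ S := by
  induction S using TensorProduct.induction_on with
  | zero => simp
  | tmul x y => simp only [map_tmul, tmul_mul_tmul, h₁, h₂]
  | add S T hS hT => simp only [map_add, add_mul, mul_add, hS, hT]

end AlgebraTensorProduct

def twistRMatrix (f : H ≃ₐ[K] H) (F R : H ⊗[K] H) : H ⊗[K] H :=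
  Ring.inverse F * Algebra.TensorProduct.map f.toAlgHom f.toAlgHom R * TensorProduct.comm K H H F

variable {K H}

theorem twistRMatrix_semiconjBy_comm_comul {f : H ≃ₐ[K] H} {F R : H ⊗[K] H}
    (hF : IsTwistedAut K H f F) (hR : IsRMatrix K H R) (y : H) :
    SemiconjBy (twistRMatrix K H f F R) (TensorProduct.comm K H H (cm K H y)) (cm K H y) := by
  obtain ⟨x, rfl⟩ := f.surjective y
  have hτF : SemiconjBy (TensorProduct.comm K H H F) (TensorProduct.comm K H H (cm K H (f x)))
      (Algebra.TensorProduct.map f.toAlgHom f.toAlgHom (TensorProduct.comm K H H (cm K H x))) := by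
    have h := SemiconjBy.map (hF.conj x) (Algebra.TensorProduct.comm K H H)
    rwa [Algebra.TensorProduct.comm_map] at h
  exact ((SemiconjBy.ringInverse_symm_left hF.isUnit (hF.conj x)).mul_left
    (SemiconjBy.map (hR.conj x) (Algebra.TensorProduct.map f.toAlgHom f.toAlgHom))).mul_left hτF

theorem gauge_mul_twistRMatrix_target {f g : H ≃ₐ[K] H} {F G : H ⊗[K] H} {a : H}
    (hG : IsUnit G) (hcomm : ∀ x : H, a * f x = g x * a)
    (hmon : G * cm K H a = (a ⊗ₜ[K] a) * F) (R : H ⊗[K] H) :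
    G * twistRMatrix K H g G R * TensorProduct.comm K H H (cm K H a)
      = (a ⊗ₜ[K] a) * Algebra.TensorProduct.map f.toAlgHom f.toAlgHom R *
        TensorProduct.comm K H H F := by
  calc G * twistRMatrix K H g G R * TensorProduct.comm K H H (cm K H a)
      = Algebra.TensorProduct.map g.toAlgHom g.toAlgHom R *
          TensorProduct.comm K H H (G * cm K H a) := by
        rw [twistRMatrix, ← mul_assoc G, ← mul_assoc G, Ring.mul_inverse_cancel _ hG, one_mul,
          mul_assoc, ← TensorProduct.comm_mul]
    _ = Algebra.TensorProduct.map g.toAlgHom g.toAlgHom R * (a ⊗ₜ[K] a) *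
          TensorProduct.comm K H H F := by
        rw [hmon, TensorProduct.comm_mul, TensorProduct.comm_tmul, mul_assoc]
    _ = _ := by
        rw [Algebra.TensorProduct.map_mul_tmul_eq_tmul_mul_map (f₁ := f.toAlgHom)
          (f₂ := f.toAlgHom) (g₁ := g.toAlgHom) (g₂ := g.toAlgHom) hcomm hcomm]

theorem gauge_mul_twistRMatrix_source {f : H ≃ₐ[K] H} {F G R : H ⊗[K] H} {a : H}
    (hF : IsTwistedAut K H f F) (hR : IsRMatrix K H R)
    (hmon : G * cm K H a = (a ⊗ₜ[K] a) * F) :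
    G * twistRMatrix K H f F R * TensorProduct.comm K H H (cm K H a)
      = (a ⊗ₜ[K] a) * Algebra.TensorProduct.map f.toAlgHom f.toAlgHom R *
        TensorProduct.comm K H H F := by
  calc G * twistRMatrix K H f F R * TensorProduct.comm K H H (cm K H a)
      = G * cm K H a * twistRMatrix K H f F R := by
        rw [mul_assoc, (twistRMatrix_semiconjBy_comm_comul hF hR a).eq, ← mul_assoc]
    _ = (a ⊗ₜ[K] a) * (F * twistRMatrix K H f F R) := by rw [hmon, mul_assoc]
    _ = _ := by
        rw [twistRMatrix, ← mul_assoc F, ← mul_assoc F, Ring.mul_inverse_cancel _ hF.isUnit,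
          one_mul, ← mul_assoc]

theorem gauge_acts_equally (f g : H ≃ₐ[K] H) (F G : H ⊗[K] H)
    (hF : IsTwistedAut K H f F) (hG : IsTwistedAut K H g G)
    (a : H) (haU : IsUnit a)
    (hcomm : ∀ x : H, a * f x = g x * a)
    (hmon : G * cm K H a = (a ⊗ₜ[K] a) * F)
    (R : H ⊗[K] H) (hR : IsRMatrix K H R) :
    Ring.inverse G * Algebra.TensorProduct.map g.toAlgHom g.toAlgHom R *
        TensorProduct.comm K H H G
      = Ring.inverse F * Algebra.TensorProduct.map f.toAlgHom f.toAlgHom R *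
        TensorProduct.comm K H H F := by
  have hτΔa : IsUnit (TensorProduct.comm K H H (cm K H a)) :=
    (haU.map (Bialgebra.comulAlgHom K H)).map (Algebra.TensorProduct.comm K H H)
  refine hG.isUnit.mul_right_injective (hτΔa.mul_left_injective ?_)
  change G * twistRMatrix K H g G R * _ = G * twistRMatrix K H f F R * _
  rw [gauge_mul_twistRMatrix_target hG.isUnit hcomm hmon,
    gauge_mul_twistRMatrix_source hF hR hmon]

end
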